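/- (Gluing lemma for masked plans.) Let p, r, q ∈ Σ_m and let M ∈ {0,1}^{m×m} be the mask matrix of the keypoint pair set K = {(i,i) : i ∈ I}. Let π₁ ∈ Π(p,r;M) and π₂ ∈ Π(r,q;M). Define r̃ ∈ ℝ^m by r̃_k = r_k if r_k > 0 and r̃_k = 1 otherwise, and set γ = (M⊙π₁)·diag(1/r̃)·(M⊙π₂). Then γ ≥ 0 entrywise, γ1_m = p, γ^T 1_m = q, and γ_{i,j} = 0 whenever M_{i,j} = 0; consequently M⊙γ = γ and γ ∈ Π(p,q;M). -/

import Mathlib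

open Finset

noncomputable section

variable {m : ℕ}

/-- Mask matrix for the keypoint pair set `K = {(i,i) : i ∈ I}`. -/
def maskI (I : Finset (Fin m)) : Matrix (Fin m) (Fin m) ℝ :=
  fun i j => if i = j ∧ i ∈ I then 1 else if i ∈ I ∨ j ∈ I then 0 else 1

/-- The masked feasible set `Π(p, q; M)`. -/
def PiM (M : Matrix (Fin m) (Fin m) ℝ) (p q : Fin m → ℝ) :
    Set (Matrix (Fin m) (Fin m) ℝ) :=
  {π | (∀ i j, 0 ≤ π i j) ∧ (∀ i, ∑ j, M i j * π i j = p i) ∧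
    (∀ j, ∑ i, M i j * π i j = q j)}

/-- The relation vector of the point `x k` to the keypoints indexed by `I`,
computed with temperature `τ`. -/
def rel {X : Type*} [MetricSpace X] (x : Fin m → X) (I : Finset (Fin m)) (τ : ℝ)
    (k : Fin m) : ↥I → ℝ :=
  fun u => Real.exp (-(dist (x k) (x u)) / τ) /
    ∑ u' : ↥I, Real.exp (-(dist (x k) (x u')) / τ)

/-- The keypoint-guided KP objective
`Σ_{i,j} M_{i,j} π_{i,j} (α c(x_i, y_j) + (1−α) d(R^s_i, R^t_j))`. -/
def krkObj {X : Type*} [MetricSpace X] (x y : Fin m → X) (I : Finset (Fin m))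
    (τ τ' α : ℝ) (d : (↥I → ℝ) → (↥I → ℝ) → ℝ)
    (π : Matrix (Fin m) (Fin m) ℝ) : ℝ :=
  ∑ i, ∑ j, maskI I i j * π i j *
    (α * dist (x i) (y j) + (1 - α) * d (rel x I τ i) (rel y I τ' j))

/-- `S_krk(p,q)`: the optimal value of the keypoint-guided KP problem. -/
def Skrk {X : Type*} [MetricSpace X] (x y : Fin m → X) (I : Finset (Fin m))
    (τ τ' α : ℝ) (d : (↥I → ℝ) → (↥I → ℝ) → ℝ) (p q : Fin m → ℝ) : ℝ :=
  sInf {v | ∃ π ∈ PiM (maskI I) p q, v = krkObj x y I τ τ' α d π}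

/- Dividing by `r̃` instead of `r` is harmless: a column of `M ⊙ π₁` (row of `M ⊙ π₂`) whose total
`r k` vanishes is zero, its entries being nonnegative. So summing the glued plan over `j` gives back
the row sums `p` of `M ⊙ π₁`, and over `i` the column sums `q` of `M ⊙ π₂`. The glued plan stays
inside the mask because the support of `maskI I` (`i = j`, or both outside `I`) is transitive. -/

lemma maskI_eq_one_iff (I : Finset (Fin m)) (i j : Fin m) :
    maskI I i j = 1 ↔ i = j ∨ (i ∉ I ∧ j ∉ I) := by
  unfold maskI
  split_ifs <;> grind

lemma maskI_eq_zero_or_one (I : Finset (Fin m)) (i j : Fin m) :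
    maskI I i j = 0 ∨ maskI I i j = 1 := by
  unfold maskI
  split_ifs <;> simp

lemma maskI_nonneg (I : Finset (Fin m)) (i j : Fin m) : 0 ≤ maskI I i j := by
  rcases maskI_eq_zero_or_one I i j with h | h <;> simp [h]

lemma maskI_mul_maskI_eq_zero {I : Finset (Fin m)} {i j : Fin m} (h : maskI I i j = 0)
    (k : Fin m) : maskI I i k * maskI I k j = 0 := by
  have hij : ¬(i = j ∨ (i ∉ I ∧ j ∉ I)) := by
    rw [← maskI_eq_one_iff, h]; norm_num
  rcases maskI_eq_zero_or_one I i k with hik | hik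
  · simp [hik]
  rcases maskI_eq_zero_or_one I k j with hkj | hkj
  · simp [hkj]
  rw [maskI_eq_one_iff] at hik hkj
  grind

lemma mul_one_div_mul_sum_eq_self {ι : Type*} [Fintype ι] {a : ι → ℝ} (ha : ∀ i, 0 ≤ a i)
    {t : ℝ} (ht : t = if 0 < ∑ i, a i then ∑ i, a i else 1) (i : ι) :
    a i * (1 / t) * ∑ i, a i = a i := by
  split_ifs at ht with hpos
  · rw [ht]; field_simp
  · have hsum : ∑ i, a i = 0 := le_antisymm (not_lt.mp hpos) (sum_nonneg fun i _ => ha i)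
    rw [hsum, (sum_eq_zero_iff_of_nonneg fun i _ => ha i).mp hsum i (mem_univ i)]
    ring

section Gluing

variable {ι κ ν : Type*} [Fintype ι] [Fintype κ] [Fintype ν]
  (A : Matrix ι κ ℝ) (B : Matrix κ ν ℝ) {r rt : κ → ℝ}

lemma sum_glue_row (hA : ∀ i k, 0 ≤ A i k) (hAr : ∀ k, ∑ i, A i k = r k)
    (hBr : ∀ k, ∑ j, B k j = r k) (hrt : ∀ k, rt k = if 0 < r k then r k else 1) (i : ι) :
    ∑ j, ∑ k, A i k * (1 / rt k) * B k j = ∑ k, A i k := by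
  rw [sum_comm]
  refine sum_congr rfl fun k _ => ?_
  rw [← mul_sum, hBr, ← hAr]
  exact mul_one_div_mul_sum_eq_self (fun i => hA i k) (by rw [hrt, hAr]) i

lemma sum_glue_col (hB : ∀ k j, 0 ≤ B k j) (hAr : ∀ k, ∑ i, A i k = r k)
    (hBr : ∀ k, ∑ j, B k j = r k) (hrt : ∀ k, rt k = if 0 < r k then r k else 1) (j : ν) :
    ∑ i, ∑ k, A i k * (1 / rt k) * B k j = ∑ k, B k j := by
  rw [sum_comm]
  refine sum_congr rfl fun k _ => ?_
  have hcancel := mul_one_div_mul_sum_eq_self (a := fun j => B k j) (t := rt k)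
    (fun j => hB k j) (by rw [hrt, hBr]) j
  rw [hBr] at hcancel
  rw [← sum_mul, ← sum_mul, hAr]
  linear_combination hcancel

end Gluing

lemma mul_nonneg_of_mem_PiM {M : Matrix (Fin m) (Fin m) ℝ} (hM : ∀ i j, 0 ≤ M i j) {p q : Fin m → ℝ}
    {π : Matrix (Fin m) (Fin m) ℝ} (hπ : π ∈ PiM M p q) (i j : Fin m) : 0 ≤ M i j * π i j :=
  mul_nonneg (hM i j) (hπ.1 i j)

lemma mem_PiM_of_mask_mul_eq {M γ : Matrix (Fin m) (Fin m) ℝ} {p q : Fin m → ℝ}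
    (hnn : ∀ i j, 0 ≤ γ i j) (hM : ∀ i j, M i j * γ i j = γ i j)
    (hrow : ∀ i, ∑ j, γ i j = p i) (hcol : ∀ j, ∑ i, γ i j = q j) : γ ∈ PiM M p q :=
  ⟨hnn, fun i => by simp only [hM, hrow], fun j => by simp only [hM, hcol]⟩

theorem masked_gluing_general
    (p r q : Fin m → ℝ) (I : Finset (Fin m))
    (π₁ π₂ : Matrix (Fin m) (Fin m) ℝ)
    (hπ₁ : π₁ ∈ PiM (maskI I) p r) (hπ₂ : π₂ ∈ PiM (maskI I) r q)
    (rt : Fin m → ℝ) (hrt : ∀ k, rt k = if 0 < r k then r k else 1)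
    (γ : Matrix (Fin m) (Fin m) ℝ)
    (hγ : ∀ i j, γ i j
      = ∑ k, (maskI I i k * π₁ i k) * (1 / rt k) * (maskI I k j * π₂ k j)) :
    (∀ i j, 0 ≤ γ i j)
    ∧ (∀ i, ∑ j, γ i j = p i)
    ∧ (∀ j, ∑ i, γ i j = q j)
    ∧ (∀ i j, maskI I i j = 0 → γ i j = 0)
    ∧ (∀ i j, maskI I i j * γ i j = γ i j)
    ∧ γ ∈ PiM (maskI I) p q := by
  have hA := mul_nonneg_of_mem_PiM (maskI_nonneg I) hπ₁
  have hB := mul_nonneg_of_mem_PiM (maskI_nonneg I) hπ₂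
  have hrt_pos : ∀ k, 0 < rt k := fun k => by
    rw [hrt]; split_ifs with h
    exacts [h, one_pos]
  have hnn : ∀ i j, 0 ≤ γ i j := fun i j => by
    rw [hγ]
    exact sum_nonneg fun k _ =>
      mul_nonneg (mul_nonneg (hA i k) (one_div_pos.mpr (hrt_pos k)).le) (hB k j)
  have hrow : ∀ i, ∑ j, γ i j = p i := fun i => by
    simp only [hγ]
    rw [sum_glue_row _ _ hA hπ₁.2.2 hπ₂.2.1 hrt, hπ₁.2.1]
  have hcol : ∀ j, ∑ i, γ i j = q j := fun j => by
    simp only [hγ]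
    rw [sum_glue_col _ _ hB hπ₁.2.2 hπ₂.2.1 hrt, hπ₂.2.2]
  have hzero : ∀ i j, maskI I i j = 0 → γ i j = 0 := fun i j h => by
    rw [hγ]
    refine sum_eq_zero fun k _ => ?_
    linear_combination π₁ i k * (1 / rt k) * π₂ k j * maskI_mul_maskI_eq_zero h k
  have hmask : ∀ i j, maskI I i j * γ i j = γ i j := fun i j => by
    rcases maskI_eq_zero_or_one I i j with h | h
    · rw [h, hzero i j h, mul_zero]
    · rw [h, one_mul]
  exact ⟨hnn, hrow, hcol, hzero, hmask, mem_PiM_of_mask_mul_eq hnn hmask hrow hcol⟩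

/-- Gluing lemma for masked plans: gluing `π₁ ∈ Π(p,r;M)` and
`π₂ ∈ Π(r,q;M)` through the middle marginal `r` produces a nonnegative matrix `γ`
with row sums `p`, column sums `q`, vanishing wherever the mask vanishes; hence
`M ⊙ γ = γ` and `γ ∈ Π(p,q;M)`. -/
theorem masked_gluing
    (p r q : Fin m → ℝ) (I : Finset (Fin m))
    (hps : p ∈ stdSimplex ℝ (Fin m)) (hrs : r ∈ stdSimplex ℝ (Fin m))
    (hqs : q ∈ stdSimplex ℝ (Fin m))
    (π₁ π₂ : Matrix (Fin m) (Fin m) ℝ)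
    (hπ₁ : π₁ ∈ PiM (maskI I) p r) (hπ₂ : π₂ ∈ PiM (maskI I) r q)
    (rt : Fin m → ℝ) (hrt : ∀ k, rt k = if 0 < r k then r k else 1)
    (γ : Matrix (Fin m) (Fin m) ℝ)
    (hγ : ∀ i j, γ i j
      = ∑ k, (maskI I i k * π₁ i k) * (1 / rt k) * (maskI I k j * π₂ k j)) :
    (∀ i j, 0 ≤ γ i j)
    ∧ (∀ i, ∑ j, γ i j = p i)
    ∧ (∀ j, ∑ i, γ i j = q j)
    ∧ (∀ i j, maskI I i j = 0 → γ i j = 0)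
    ∧ (∀ i j, maskI I i j * γ i j = γ i j)
    ∧ γ ∈ PiM (maskI I) p q :=
  masked_gluing_general p r q I π₁ π₂ hπ₁ hπ₂ rt hrt γ hγ
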